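/- Let $H, H'$ be Hermitian matrices on $\mathbb{C}^{2^n}$, and let $\Omega = \ketbra{\Omega}{\Omega}$ be the maximally entangled state on $\mathbb{C}^{2^n}\otimes\mathbb{C}^{2^n}$. Then the normalized Choi states of the evolution channels satisfy $\frac{1}{\sqrt{2}}\|(e^{-iHt}\otimes I)\Omega(e^{iHt}\otimes I) - (e^{-iH't}\otimes I)\Omega(e^{iH't}\otimes I)\|_2 \le \frac{t}{\sqrt{2^n}}\|H - H'\|_2$, where $\|\cdot\|_2$ is the Frobenius norm. -/

import Mathlib

open Matrix Complex
open scoped Matrix.Norms.L2Operator Kronecker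

/-- The Frobenius norm of a complex matrix. -/
noncomputable def frob {m m' : Type*} [Fintype m] [Fintype m'] (A : Matrix m m' ℂ) : ℝ :=
  Real.sqrt (∑ i, ∑ j, ‖A i j‖ ^ 2)

/-- The maximally entangled state vector `|Ω⟩ = 2^{-n/2} ∑_j |j⟩⊗|j⟩` on `ℂ^{2ⁿ} ⊗ ℂ^{2ⁿ}`. -/
noncomputable def maxEntVec (n : ℕ) : (Fin n → Fin 2) × (Fin n → Fin 2) → ℂ :=
  fun jk => if jk.1 = jk.2 then ((Real.sqrt (2 ^ n) : ℝ) : ℂ)⁻¹ else 0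

/-! In terms of the vectorization `vec`, the maximally entangled vector is `vec 1 / √2ⁿ`, so
`(U ⊗ I)|Ω⟩ = vec Uᵀ / √2ⁿ`, a unit vector when `U` is unitary. For unit vectors `u, v`,
`‖uu* - vv*‖₂² = 2 - 2|⟨u,v⟩|²` and `2‖u - v‖₂² - ‖uu* - vv*‖₂² = 2|1 - ⟨u,v⟩|² ≥ 0`; hence the
Choi states of `U` and `V` are at most `√(2/2ⁿ) ‖U - V‖₂` apart. Finally, for skew-Hermitian
`X, Y` the path `s ↦ e^{sX} e^{-sY}` has derivative `e^{sX} (X - Y) e^{-sY}`, whose Frobenius norm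
is `‖X - Y‖₂` by unitary invariance, so the mean value inequality gives
`‖e^{tX} - e^{tY}‖₂ ≤ t ‖X - Y‖₂`. -/

section Frobenius

open scoped Matrix.Norms.Frobenius

variable {ι m n : Type*} [Fintype ι] [Fintype m] [Fintype n]

theorem frob_eq_norm (A : Matrix m n ℂ) : frob A = ‖A‖ := by
  simp only [frob, frobenius_norm_def, Real.sqrt_eq_rpow, Real.rpow_two]

theorem trace_conjTranspose_mul_self_eq_frobenius_norm_sq (A : Matrix m n ℂ) :
    (Aᴴ * A).trace = (‖A‖ ^ 2 : ℝ) := by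
  rw [← frob_eq_norm, frob, Real.sq_sqrt (by positivity), trace, Finset.sum_comm]
  push_cast
  refine Finset.sum_congr rfl fun j _ => Finset.sum_congr rfl fun i _ => ?_
  simp only [conjTranspose_apply, RCLike.star_def, Complex.conj_mul']

theorem frobenius_norm_sq_of_mem_unitaryGroup [DecidableEq ι] {U : Matrix ι ι ℂ}
    (hU : U ∈ unitaryGroup ι ℂ) : ‖U‖ ^ 2 = Fintype.card ι := by
  have := trace_conjTranspose_mul_self_eq_frobenius_norm_sq U
  rw [← star_eq_conjTranspose, (mem_unitaryGroup_iff').mp hU, trace_one] at this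
  exact_mod_cast this.symm

theorem frobenius_norm_unitary_mul [DecidableEq m] {U : Matrix m m ℂ} (hU : U ∈ unitaryGroup m ℂ)
    (A : Matrix m n ℂ) : ‖U * A‖ = ‖A‖ := by
  have h := trace_conjTranspose_mul_self_eq_frobenius_norm_sq (U * A)
  rw [conjTranspose_mul, Matrix.mul_assoc, ← Matrix.mul_assoc Uᴴ, ← star_eq_conjTranspose U,
    (mem_unitaryGroup_iff').mp hU, Matrix.one_mul,
    trace_conjTranspose_mul_self_eq_frobenius_norm_sq, Complex.ofReal_inj] at h
  exact (sq_eq_sq₀ (norm_nonneg _) (norm_nonneg _)).mp h.symm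

theorem frobenius_norm_mul_unitary [DecidableEq n] (A : Matrix m n ℂ) {U : Matrix n n ℂ}
    (hU : U ∈ unitaryGroup n ℂ) : ‖A * U‖ = ‖A‖ := by
  rw [← frobenius_norm_conjTranspose, conjTranspose_mul, ← star_eq_conjTranspose U,
    frobenius_norm_unitary_mul (Unitary.star_mem hU), frobenius_norm_conjTranspose]

-- Stated under the Frobenius norm only because the general lemma needs some normed-algebra
-- structure on matrices.
theorem exp_mem_unitaryGroup_of_mem_skewAdjoint [DecidableEq ι] {X : Matrix ι ι ℂ}
    (hX : X ∈ skewAdjoint (Matrix ι ι ℂ)) : NormedSpace.exp X ∈ unitaryGroup ι ℂ :=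
  NormedSpace.exp_mem_unitary_of_mem_skewAdjoint hX

theorem frobenius_norm_exp_smul_sub_exp_smul_le [DecidableEq ι] {X Y : Matrix ι ι ℂ}
    (hX : X ∈ skewAdjoint (Matrix ι ι ℂ)) (hY : Y ∈ skewAdjoint (Matrix ι ι ℂ)) {t : ℝ}
    (ht : 0 ≤ t) :
    ‖NormedSpace.exp (t • X) - NormedSpace.exp (t • Y)‖ ≤ t * ‖X - Y‖ := by
  have hunit : ∀ {Z : Matrix ι ι ℂ}, Z ∈ skewAdjoint _ → ∀ s : ℝ,
      NormedSpace.exp (s • Z) ∈ unitaryGroup ι ℂ := fun hZ s =>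
    exp_mem_unitaryGroup_of_mem_skewAdjoint (skewAdjoint.smul_mem s hZ)
  set f : ℝ → Matrix ι ι ℂ := fun s => NormedSpace.exp (s • X) * NormedSpace.exp (s • -Y)
  have hf : ∀ s, HasDerivAt f
      (NormedSpace.exp (s • X) * (X - Y) * NormedSpace.exp (s • -Y)) s := fun s =>
    ((hasDerivAt_exp_smul_const X s).mul (hasDerivAt_exp_smul_const' (-Y) s)).congr_deriv
      (by noncomm_ring)
  have hf' : ∀ s, ‖NormedSpace.exp (s • X) * (X - Y) * NormedSpace.exp (s • -Y)‖ = ‖X - Y‖ :=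
    fun s => by
      rw [frobenius_norm_mul_unitary _ (hunit (neg_mem hY) s),
        frobenius_norm_unitary_mul (hunit hX s)]
  have hmvt := norm_image_sub_le_of_norm_deriv_le_segment' (fun s _ => (hf s).hasDerivWithinAt)
    (fun s _ => (hf' s).le) t ⟨ht, le_rfl⟩
  have hdiff : NormedSpace.exp (t • X) - NormedSpace.exp (t • Y)
      = (f t - f 0) * NormedSpace.exp (t • Y) := by
    have hinv : NormedSpace.exp (t • -Y) * NormedSpace.exp (t • Y) = 1 := by
      rw [smul_neg, ← Matrix.exp_add_of_commute _ _ (Commute.refl (t • Y)).neg_left,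
        neg_add_cancel, NormedSpace.exp_zero]
    simp only [f, zero_smul, NormedSpace.exp_zero, Matrix.one_mul, sub_mul, Matrix.mul_assoc,
      hinv, Matrix.mul_one]
  rw [hdiff, frobenius_norm_mul_unitary _ (hunit hY t)]
  linarith

theorem frobenius_norm_sq_vecMulVec_sub_le {u v : ι → ℂ} (hu : star u ⬝ᵥ u = 1)
    (hv : star v ⬝ᵥ v = 1) :
    ‖vecMulVec u (star u) - vecMulVec v (star v)‖ ^ 2 ≤ 2 * (star (u - v) ⬝ᵥ (u - v)).re := by
  set c := star u ⬝ᵥ v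
  have hu' : u ⬝ᵥ star u = 1 := by rw [dotProduct_comm, hu]
  have hv' : v ⬝ᵥ star v = 1 := by rw [dotProduct_comm, hv]
  have hc : star v ⬝ᵥ u = star c := star_dotProduct v u
  have hc' : u ⬝ᵥ star v = star c := by rw [dotProduct_comm, hc]
  have hc'' : v ⬝ᵥ star u = c := dotProduct_comm _ _
  have hproj : ‖vecMulVec u (star u) - vecMulVec v (star v)‖ ^ 2 = 2 - 2 * normSq c := by
    have hP : ∀ w : ι → ℂ, (vecMulVec w (star w))ᴴ = vecMulVec w (star w) := fun w => by
      rw [conjTranspose_vecMulVec, star_star]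
    rw [← Complex.ofReal_inj, ← trace_conjTranspose_mul_self_eq_frobenius_norm_sq,
      conjTranspose_sub, hP, hP]
    simp only [sub_mul, mul_sub, vecMulVec_mul_vecMulVec, trace_sub, trace_vecMulVec,
      dotProduct_smul, hu, hv, hc, hu', hv', hc', hc'', smul_eq_mul]
    change 1 * 1 - star c * c - (c * star c - 1 * 1) = _
    rw [mul_comm (star c), Complex.star_def, Complex.mul_conj]
    push_cast
    ring
  have hdist : star (u - v) ⬝ᵥ (u - v) = 2 - (c + star c) := by
    rw [star_sub, sub_dotProduct, dotProduct_sub, dotProduct_sub, hu, hv, hc]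
    ring
  have hgap : 2 * (star (u - v) ⬝ᵥ (u - v)).re
      - ‖vecMulVec u (star u) - vecMulVec v (star v)‖ ^ 2 = 2 * normSq (1 - c) := by
    simp only [hproj, hdist, normSq_apply, sub_re, add_re, sub_im, one_re, one_im, Complex.star_def,
      conj_re, re_ofNat]
    ring
  linarith [normSq_nonneg (1 - c)]

end Frobenius

theorem maxEntVec_eq_smul_vec_one (n : ℕ) :
    maxEntVec n =
      ((Real.sqrt (2 ^ n) : ℝ) : ℂ)⁻¹ • vec (1 : Matrix (Fin n → Fin 2) (Fin n → Fin 2) ℂ) := by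
  ext ⟨j, k⟩
  simp [maxEntVec, vec, one_apply, eq_comm]

theorem mul_vecMulVec_star_mul_conjTranspose {l m : Type*} [Fintype m] (M : Matrix l m ℂ)
    (a : m → ℂ) : M * vecMulVec a (star a) * Mᴴ = vecMulVec (M *ᵥ a) (star (M *ᵥ a)) := by
  rw [mul_vecMulVec, vecMulVec_mul, star_mulVec]

theorem neg_I_mul_smul_mem_skewAdjoint {ι : Type*} {H : Matrix ι ι ℂ}
    (hH : H.IsHermitian) (t : ℝ) : (-I * t) • H ∈ skewAdjoint (Matrix ι ι ℂ) :=
  hH.isSelfAdjoint.smul_mem_skewAdjoint (skewAdjoint.mem_iff.mpr (by simp))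

open scoped Matrix.Norms.Frobenius in
theorem frob_exp_sub_exp_le {ι : Type*} [Fintype ι] [DecidableEq ι] {H H' : Matrix ι ι ℂ}
    (hH : H.IsHermitian) (hH' : H'.IsHermitian) {t : ℝ} (ht : 0 ≤ t) :
    frob (NormedSpace.exp ((-I * t) • H) - NormedSpace.exp ((-I * t) • H')) ≤
      t * frob (H - H') := by
  have hsmul : ∀ K : Matrix ι ι ℂ, (-I * t) • K = t • (-I • K) := fun K => by
    rw [mul_comm, mul_smul, Complex.coe_smul]
  have hI : -I ∈ skewAdjoint ℂ := neg_mem RCLike.I_mem_skewAdjoint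
  rw [hsmul, hsmul, frob_eq_norm, frob_eq_norm]
  calc _ ≤ t * ‖-I • H - -I • H'‖ :=
        frobenius_norm_exp_smul_sub_exp_smul_le (hH.isSelfAdjoint.smul_mem_skewAdjoint hI)
          (hH'.isSelfAdjoint.smul_mem_skewAdjoint hI) ht
    _ = t * ‖H - H'‖ := by rw [← smul_sub, norm_smul]; simp

noncomputable def choiState (n : ℕ) (U : Matrix (Fin n → Fin 2) (Fin n → Fin 2) ℂ) :
    Matrix ((Fin n → Fin 2) × (Fin n → Fin 2)) ((Fin n → Fin 2) × (Fin n → Fin 2)) ℂ :=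
  (U ⊗ₖ 1) * vecMulVec (maxEntVec n) (star (maxEntVec n)) * (U ⊗ₖ 1)ᴴ

open scoped Matrix.Norms.Frobenius in
theorem frob_choiState_sub_choiState_le {n : ℕ}
    {U V : Matrix (Fin n → Fin 2) (Fin n → Fin 2) ℂ} (hU : U ∈ unitaryGroup _ ℂ)
    (hV : V ∈ unitaryGroup _ ℂ) :
    frob (choiState n U - choiState n V) ≤
      Real.sqrt 2 / Real.sqrt (2 ^ n) * frob (U - V) := by
  set s : ℂ := ((Real.sqrt (2 ^ n) : ℝ) : ℂ)⁻¹
  have hvec : ∀ W : Matrix (Fin n → Fin 2) (Fin n → Fin 2) ℂ,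
      (W ⊗ₖ 1) *ᵥ maxEntVec n = s • vec Wᵀ := by
    intro W
    rw [maxEntVec_eq_smul_vec_one, mulVec_smul, kronecker_mulVec_vec, Matrix.one_mul,
      Matrix.one_mul]
  have hdot : ∀ W : Matrix (Fin n → Fin 2) (Fin n → Fin 2) ℂ,
      star (s • vec Wᵀ) ⬝ᵥ (s • vec Wᵀ) = ((‖W‖ ^ 2 / 2 ^ n : ℝ) : ℂ) := by
    intro W
    rw [star_smul, smul_dotProduct, dotProduct_smul, star_vec_dotProduct_vec,
      trace_conjTranspose_mul_self_eq_frobenius_norm_sq, frobenius_norm_transpose]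
    simp only [s, star_inv₀, Complex.star_def, Complex.conj_ofReal, smul_eq_mul]
    rw [← mul_assoc, ← mul_inv, ← Complex.ofReal_mul, Real.mul_self_sqrt (by positivity)]
    push_cast
    ring
  have hunit : ∀ {W : Matrix (Fin n → Fin 2) (Fin n → Fin 2) ℂ}, W ∈ unitaryGroup _ ℂ →
      star (s • vec Wᵀ) ⬝ᵥ (s • vec Wᵀ) = 1 := by
    intro W hW
    rw [hdot, frobenius_norm_sq_of_mem_unitaryGroup hW]
    simp
  rw [choiState, choiState, mul_vecMulVec_star_mul_conjTranspose,
    mul_vecMulVec_star_mul_conjTranspose, hvec, hvec,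
    frob_eq_norm, frob_eq_norm]
  calc _ = Real.sqrt (‖vecMulVec (s • vec Uᵀ) (star (s • vec Uᵀ))
          - vecMulVec (s • vec Vᵀ) (star (s • vec Vᵀ))‖ ^ 2) :=
        (Real.sqrt_sq (norm_nonneg _)).symm
    _ ≤ Real.sqrt (2 * (star (s • vec Uᵀ - s • vec Vᵀ) ⬝ᵥ (s • vec Uᵀ - s • vec Vᵀ)).re) :=
        Real.sqrt_le_sqrt (frobenius_norm_sq_vecMulVec_sub_le (hunit hU) (hunit hV))
    _ = Real.sqrt 2 / Real.sqrt (2 ^ n) * ‖U - V‖ := by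
        rw [← smul_sub, ← vec_sub, ← transpose_sub, hdot, Complex.ofReal_re,
          Real.sqrt_mul zero_le_two, Real.sqrt_div (by positivity), Real.sqrt_sq (norm_nonneg _)]
        ring

/-- The difference of normalized Choi states of the evolution channels of `H` and `H'`
satisfies `2^{-1/2} ‖(e^{-iHt}⊗I) Ω (e^{iHt}⊗I) − (e^{-iH't}⊗I) Ω (e^{iH't}⊗I)‖₂
  ≤ (t/√2ⁿ) ‖H − H'‖₂`. -/
theorem stmt16 {n : ℕ} (H H' : Matrix (Fin n → Fin 2) (Fin n → Fin 2) ℂ)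
    (hH : H.IsHermitian) (hH' : H'.IsHermitian) (t : ℝ) (ht : 0 ≤ t) :
    (Real.sqrt 2)⁻¹ *
      frob ((NormedSpace.exp ((-Complex.I * (t : ℂ)) • H) ⊗ₖ
              (1 : Matrix (Fin n → Fin 2) (Fin n → Fin 2) ℂ)) *
            Matrix.vecMulVec (maxEntVec n) (star (maxEntVec n)) *
            (NormedSpace.exp ((-Complex.I * (t : ℂ)) • H) ⊗ₖ
              (1 : Matrix (Fin n → Fin 2) (Fin n → Fin 2) ℂ))ᴴ -
          (NormedSpace.exp ((-Complex.I * (t : ℂ)) • H') ⊗ₖ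
              (1 : Matrix (Fin n → Fin 2) (Fin n → Fin 2) ℂ)) *
            Matrix.vecMulVec (maxEntVec n) (star (maxEntVec n)) *
            (NormedSpace.exp ((-Complex.I * (t : ℂ)) • H') ⊗ₖ
              (1 : Matrix (Fin n → Fin 2) (Fin n → Fin 2) ℂ))ᴴ) ≤
      t / Real.sqrt (2 ^ n) * frob (H - H') := by
  have hU := exp_mem_unitaryGroup_of_mem_skewAdjoint (neg_I_mul_smul_mem_skewAdjoint hH t)
  have hU' := exp_mem_unitaryGroup_of_mem_skewAdjoint (neg_I_mul_smul_mem_skewAdjoint hH' t)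
  calc _ ≤ (Real.sqrt 2)⁻¹ * (Real.sqrt 2 / Real.sqrt (2 ^ n) *
        frob (NormedSpace.exp ((-I * t) • H) - NormedSpace.exp ((-I * t) • H'))) := by
        gcongr
        exact frob_choiState_sub_choiState_le hU hU'
    _ ≤ (Real.sqrt 2)⁻¹ * (Real.sqrt 2 / Real.sqrt (2 ^ n) * (t * frob (H - H'))) := by
        gcongr
        exact frob_exp_sub_exp_le hH hH' ht
    _ = t / Real.sqrt (2 ^ n) * frob (H - H') := by
        field_simp
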